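/- Let Ψ_j^HO(x,k) = (2^j j!)^{-1/2} (b/π)^{1/4} e^{-b(x - k/b)²/2} H_j(b^{1/2}(x - k/b)) be the normalized harmonic oscillator eigenfunction. Then there is a constant c_j > 0 depending only on j such that for all k ≥ 0, the L²-norm of (bx - k)² Ψ_j^HO(x,k) over the half-line x < 0 satisfies ‖(bx - k)² Ψ_j^HO(·,k)‖_{L²((-∞,0))} ≤ c_j b e^{-k²/(4b)}. -/

import Mathlib

/-!
Substituting `y = √b (x - k/b)` turns `((bx - k)² Ψ_j^HO)²` into
`b² (2^j j!)⁻¹ √(b/π) · y⁴ H_j(y)² e^{-y²}`. For `x < 0` and `k ≥ 0` one has `y ≤ -k/√b`, so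
`e^{-y²} ≤ e^{-k²/(2b)} e^{-y²/2}`; integrating the remaining `y⁴ H_j(y)² e^{-y²/2}` over all of `ℝ`
costs the Jacobian `1/√b`, which cancels the `√b` of the normalisation. Hence the squared norm is
at most `C_j b² e^{-k²/(2b)}` with `C_j` depending only on `j`.
-/

open MeasureTheory Real Set Polynomial

theorem integrable_pow_mul_exp_neg_mul_sq {b : ℝ} (hb : 0 < b) (n : ℕ) :
    Integrable fun x : ℝ => x ^ n * exp (-b * x ^ 2) := by
  simpa only [rpow_natCast] using
    integrable_rpow_mul_exp_neg_mul_sq hb (s := n) (by linarith [n.cast_nonneg (α := ℝ)])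

theorem Polynomial.integrable_eval_mul_exp_neg_mul_sq {b : ℝ} (hb : 0 < b) (p : ℝ[X]) :
    Integrable fun x : ℝ => p.eval x * exp (-b * x ^ 2) := by
  induction p using Polynomial.induction_on' with
  | add p q hp hq => simpa only [eval_add, add_mul, Pi.add_def] using hp.add hq
  | monomial n a =>
    simpa only [eval_monomial, mul_assoc] using (integrable_pow_mul_exp_neg_mul_sq hb n).const_mul a

theorem integral_comp_mul_sub {f : ℝ → ℝ} {s : ℝ} (hs : 0 < s) (m : ℝ) :
    ∫ x, f (s * (x - m)) = s⁻¹ * ∫ y, f y := by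
  rw [integral_sub_right_eq_self (fun x => f (s * x)), Measure.integral_comp_mul_left,
    abs_of_pos (inv_pos.2 hs), smul_eq_mul]

theorem setIntegral_Iio_comp_mul_sub_mul_exp_neg_sq_le {φ : ℝ → ℝ} (hφ : ∀ y, 0 ≤ φ y)
    (hφi : Integrable fun y => φ y * exp (-(1 / 2) * y ^ 2)) {s m : ℝ} (hs : 0 < s) (hm : 0 ≤ m) :
    ∫ x in Iio 0, φ (s * (x - m)) * exp (-(s * (x - m)) ^ 2)
      ≤ exp (-(1 / 2) * (s * m) ^ 2) * (s⁻¹ * ∫ y, φ y * exp (-(1 / 2) * y ^ 2)) := by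
  set ψ : ℝ → ℝ := fun y => φ y * exp (-(1 / 2) * y ^ 2)
  have hψ : ∀ y, 0 ≤ ψ y := fun y => mul_nonneg (hφ y) (exp_pos _).le
  have hψi : Integrable fun x => exp (-(1 / 2) * (s * m) ^ 2) * ψ (s * (x - m)) :=
    ((hφi.comp_mul_left' hs.ne').comp_sub_right m).const_mul _
  have htail : ∀ x ∈ Iio (0 : ℝ), φ (s * (x - m)) * exp (-(s * (x - m)) ^ 2)
      ≤ exp (-(1 / 2) * (s * m) ^ 2) * ψ (s * (x - m)) := by
    intro x hx
    have hsq : (s * m) ^ 2 ≤ (s * (x - m)) ^ 2 := by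
      have : 0 ≤ s * m := by positivity
      nlinarith [mul_pos hs (neg_pos.2 (mem_Iio.1 hx))]
    calc φ (s * (x - m)) * exp (-(s * (x - m)) ^ 2)
        ≤ φ (s * (x - m)) * exp (-(1 / 2) * (s * m) ^ 2 + -(1 / 2) * (s * (x - m)) ^ 2) :=
          mul_le_mul_of_nonneg_left (exp_le_exp.2 (by linarith)) (hφ _)
      _ = _ := by rw [exp_add]; ring
  calc ∫ x in Iio 0, φ (s * (x - m)) * exp (-(s * (x - m)) ^ 2)
      ≤ ∫ x in Iio 0, exp (-(1 / 2) * (s * m) ^ 2) * ψ (s * (x - m)) :=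
        integral_mono_of_nonneg (ae_of_all _ fun x => mul_nonneg (hφ _) (exp_pos _).le)
          hψi.integrableOn ((ae_restrict_iff' measurableSet_Iio).2 (ae_of_all _ htail))
    _ ≤ ∫ x, exp (-(1 / 2) * (s * m) ^ 2) * ψ (s * (x - m)) :=
        setIntegral_le_integral hψi (ae_of_all _ fun x => mul_nonneg (exp_pos _).le (hψ _))
    _ = _ := by rw [integral_const_mul, integral_comp_mul_sub hs]

noncomputable def harmonicOscillatorEigenfunction (j : ℕ) (b k x : ℝ) : ℝ :=
  (2 ^ j * j.factorial : ℝ) ^ (-(1 : ℝ) / 2) * (b / π) ^ ((1 : ℝ) / 4)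
    * exp (-(b * (x - k / b) ^ 2) / 2)
    * ((hermite j).map (Int.castRingHom ℝ)).eval (b ^ ((1 : ℝ) / 2) * (x - k / b))

theorem sq_mul_harmonicOscillatorEigenfunction_sq (j : ℕ) {b : ℝ} (hb : 0 < b) (k x : ℝ) :
    ((b * x - k) ^ 2 * harmonicOscillatorEigenfunction j b k x) ^ 2
      = (2 ^ j * j.factorial : ℝ)⁻¹ * √(b / π) * b ^ 2 *
        ((X ^ 4 * ((hermite j).map (Int.castRingHom ℝ)) ^ 2).eval (√b * (x - k / b))
          * exp (-(√b * (x - k / b)) ^ 2)) := by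
  have hnorm : ((2 ^ j * j.factorial : ℝ) ^ (-(1 : ℝ) / 2)) ^ 2 = (2 ^ j * j.factorial : ℝ)⁻¹ := by
    rw [← rpow_mul_natCast (by positivity)]; norm_num [rpow_neg_one]
  have hdens : ((b / π) ^ ((1 : ℝ) / 4)) ^ 2 = √(b / π) := by
    rw [← rpow_mul_natCast (div_pos hb pi_pos).le, sqrt_eq_rpow]; norm_num
  have hgauss : exp (-(b * (x - k / b) ^ 2) / 2) ^ 2 = exp (-(√b * (x - k / b)) ^ 2) := by
    rw [← exp_nat_mul, mul_pow, sq_sqrt hb.le]; ring_nf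
  have hpot : (b * x - k) ^ 2 = b * (√b * (x - k / b)) ^ 2 := by
    rw [mul_pow, sq_sqrt hb.le]; field_simp
  rw [harmonicOscillatorEigenfunction, ← sqrt_eq_rpow, hpot, ← hnorm, ← hdens, ← hgauss]
  simp only [eval_mul, eval_pow, eval_X]
  ring

noncomputable def harmonicOscillatorHalflineConstant (j : ℕ) : ℝ :=
  (2 ^ j * j.factorial : ℝ)⁻¹ / √π *
    ∫ y, (X ^ 4 * ((hermite j).map (Int.castRingHom ℝ)) ^ 2).eval y * exp (-(1 / 2) * y ^ 2)

theorem eval_X_pow_four_mul_sq_nonneg (q : ℝ[X]) (y : ℝ) : 0 ≤ (X ^ 4 * q ^ 2).eval y := by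
  simp only [eval_mul, eval_pow, eval_X]
  positivity

theorem harmonicOscillatorHalflineConstant_nonneg (j : ℕ) :
    0 ≤ harmonicOscillatorHalflineConstant j := by
  have : 0 ≤ ∫ y, (X ^ 4 * ((hermite j).map (Int.castRingHom ℝ)) ^ 2).eval y
      * exp (-(1 / 2) * y ^ 2) :=
    integral_nonneg fun y => mul_nonneg (eval_X_pow_four_mul_sq_nonneg _ y) (exp_pos _).le
  unfold harmonicOscillatorHalflineConstant
  positivity

theorem setIntegral_Iio_sq_mul_harmonicOscillatorEigenfunction_le (j : ℕ) {b k : ℝ} (hb : 0 < b)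
    (hk : 0 ≤ k) :
    ∫ x in Iio 0, ((b * x - k) ^ 2 * harmonicOscillatorEigenfunction j b k x) ^ 2
      ≤ harmonicOscillatorHalflineConstant j * b ^ 2 * exp (-(k ^ 2) / (2 * b)) := by
  simp_rw [sq_mul_harmonicOscillatorEigenfunction_sq j hb]
  rw [integral_const_mul]
  refine (mul_le_mul_of_nonneg_left (setIntegral_Iio_comp_mul_sub_mul_exp_neg_sq_le
    (eval_X_pow_four_mul_sq_nonneg _) (integrable_eval_mul_exp_neg_mul_sq one_half_pos _)
    (sqrt_pos.2 hb) (div_nonneg hk hb.le)) (by positivity)).trans_eq ?_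
  have hgauss : exp (-(1 / 2) * (√b * (k / b)) ^ 2) = exp (-(k ^ 2) / (2 * b)) := by
    rw [mul_pow, sq_sqrt hb.le]; field_simp
  rw [hgauss, sqrt_div hb.le, harmonicOscillatorHalflineConstant]
  field_simp

/-- With
`Ψ_j^HO(x,k) = (2^j j!)^{-1/2} (b/π)^{1/4} e^{-b(x-k/b)²/2} H_j(√b (x-k/b))`
the normalized harmonic oscillator eigenfunction, there is `c_j > 0` depending
only on `j` such that for all `b > 0` and `k ≥ 0`,
`‖(bx - k)² Ψ_j^HO(·,k)‖_{L²((-∞,0))} ≤ c_j b e^{-k²/(4b)}`. -/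
theorem harmonic_oscillator_halfline_estimate (j : ℕ)
    (Ψ : ℝ → ℝ → ℝ → ℝ)
    (hΨ : ∀ b k x : ℝ, Ψ b k x =
      ((2 ^ j * Nat.factorial j : ℝ)) ^ (-(1:ℝ)/2) * (b / Real.pi) ^ ((1:ℝ)/4)
        * Real.exp (-(b * (x - k / b) ^ 2) / 2)
        * ((Polynomial.hermite j).map (Int.castRingHom ℝ)).eval
            (b ^ ((1:ℝ)/2) * (x - k / b))) :
    ∃ c : ℝ, 0 < c ∧ ∀ b > (0:ℝ), ∀ k ≥ (0:ℝ),
      Real.sqrt (∫ x in Set.Iio (0:ℝ), ((b * x - k) ^ 2 * Ψ b k x) ^ 2)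
        ≤ c * b * Real.exp (-(k ^ 2) / (4 * b)) := by
  obtain rfl : Ψ = harmonicOscillatorEigenfunction j := funext₃ hΨ
  refine ⟨√(harmonicOscillatorHalflineConstant j) + 1, by positivity, fun b hb k hk => ?_⟩
  have hsq : harmonicOscillatorHalflineConstant j * b ^ 2 * exp (-(k ^ 2) / (2 * b))
      = (√(harmonicOscillatorHalflineConstant j) * b * exp (-(k ^ 2) / (4 * b))) ^ 2 := by
    rw [mul_pow, mul_pow, sq_sqrt (harmonicOscillatorHalflineConstant_nonneg j), ← exp_nat_mul]
    field_simp
    ring_nf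
  calc √(∫ x in Iio 0, ((b * x - k) ^ 2 * harmonicOscillatorEigenfunction j b k x) ^ 2)
      ≤ √(harmonicOscillatorHalflineConstant j) * b * exp (-(k ^ 2) / (4 * b)) :=
        sqrt_le_iff.2 ⟨by positivity,
          hsq ▸ setIntegral_Iio_sq_mul_harmonicOscillatorEigenfunction_le j hb hk⟩
    _ ≤ (√(harmonicOscillatorHalflineConstant j) + 1) * b * exp (-(k ^ 2) / (4 * b)) := by
        gcongr; linarith
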